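/- With ω as above, dω = −∑_α ∂ᵢ(F_{p^α_i}(Dw)) dz_α ∧ dx₁ ∧ … ∧ dxₙ; in particular ω is a closed form (a calibration for the graph of w) whenever w solves the minimal surface system ∑ᵢ ∂ᵢ(F_{p^α_i}(Dw)) = 0 for all α. -/

import Mathlib

noncomputable section
open Matrix

attribute [local instance] Matrix.normedAddCommGroup Matrix.normedSpace

/-- Partial derivative `∂ᵢφ(x)`. -/
def pd {n : ℕ} (φ : (Fin n → ℝ) → ℝ) (i : Fin n) (x : Fin n → ℝ) : ℝ :=
  fderiv ℝ φ x (Pi.single i 1)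

/-- The Jacobian matrix `Dw(x)`. -/
def Jac {n m : ℕ} (w : (Fin n → ℝ) → Fin m → ℝ) (x : Fin n → ℝ) :
    Matrix (Fin m) (Fin n) ℝ :=
  Matrix.of fun α i => fderiv ℝ (fun y => w y α) x (Pi.single i 1)

/-- The area integrand `F(M) = √det(Iₙ + MᵀM)`. -/
def Farea {m n : ℕ} (M : Matrix (Fin m) (Fin n) ℝ) : ℝ :=
  Real.sqrt (1 + Mᵀ * M).det

/-- `F_{p^α_i}(N)`. -/
def DFarea {m n : ℕ} (N : Matrix (Fin m) (Fin n) ℝ) (α : Fin m) (i : Fin n) : ℝ :=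
  fderiv ℝ Farea N (Matrix.single α i 1)

/-- Pointwise evaluation, at a base point `p ∈ Ω × ℝ^m ⊆ ℝⁿ × ℝ^m`, of the `n`-form
`ω = (F(Dw) − ∑ F_{p^α_i}(Dw)∂ᵢw^α) dx₁∧…∧dxₙ + ∑ F_{p^α_i}(Dw) ω^α_i`
on an `n`-tuple of vectors of `ℝⁿ × ℝ^m`, expressed via determinants. -/
def omegaForm {n m : ℕ} (w : (Fin n → ℝ) → Fin m → ℝ)
    (p : (Fin n → ℝ) × (Fin m → ℝ)) (v : Fin n → (Fin n → ℝ) × (Fin m → ℝ)) : ℝ :=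
  (Farea (Jac w p.1) - ∑ α, ∑ i, DFarea (Jac w p.1) α i * Jac w p.1 α i) *
      (Matrix.of fun r c => (v r).1 c).det
    + ∑ α, ∑ i, DFarea (Jac w p.1) α i *
        (Matrix.of fun r c : Fin n => if c = i then (v r).2 α else (v r).1 c).det

/-- The exterior derivative of `ω`, evaluated at `p` on `n+1` (constant) vectors via
the standard formula `dω(v₀,…,vₙ) = ∑ₖ (−1)ᵏ ∂_{vₖ}[ω(v₀,…,v̂ₖ,…,vₙ)]`. -/
def dOmega {n m : ℕ} (w : (Fin n → ℝ) → Fin m → ℝ)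
    (p : (Fin n → ℝ) × (Fin m → ℝ)) (v : Fin (n + 1) → (Fin n → ℝ) × (Fin m → ℝ)) : ℝ :=
  ∑ k : Fin (n + 1), (-1 : ℝ) ^ (k : ℕ) *
    fderiv ℝ (fun q => omegaForm w q (fun j => v (k.succAbove j))) p (v k)

/-- Evaluation of `dz_α ∧ dx₁ ∧ … ∧ dxₙ` on `n+1` vectors of `ℝⁿ × ℝ^m`. -/
def dzdx {n m : ℕ} (α : Fin m) (v : Fin (n + 1) → (Fin n → ℝ) × (Fin m → ℝ)) : ℝ :=
  (Matrix.of fun (r c : Fin (n + 1)) =>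
    Fin.cases ((v r).2 α) (fun j => (v r).1 j) c).det

/-! ### Auxiliary facts -/


lemma contDiff_entry {a b : ℕ} (i : Fin a) (j : Fin b) :
    ContDiff ℝ (⊤ : ℕ∞) (fun M : Matrix (Fin a) (Fin b) ℝ => M i j) :=
  ((ContinuousLinearMap.proj (R := ℝ) (φ := fun _ : Fin b => ℝ) j).contDiff).comp
    ((ContinuousLinearMap.proj (R := ℝ) (φ := fun _ : Fin a => Fin b → ℝ) i).contDiff)

lemma contDiff_det {k : ℕ} : ContDiff ℝ (⊤ : ℕ∞) (Matrix.det : Matrix (Fin k) (Fin k) ℝ → ℝ) := by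
  have h : (Matrix.det : Matrix (Fin k) (Fin k) ℝ → ℝ)
      = fun M => ∑ σ : Equiv.Perm (Fin k), (Equiv.Perm.sign σ : ℝ) * ∏ i, M (σ i) i := by
    funext M; rw [Matrix.det_apply']
  rw [h]
  exact ContDiff.sum fun σ _ => contDiff_const.mul
    (contDiff_prod fun i _ => contDiff_entry (σ i) i)

lemma det_one_add_pos {m n : ℕ} (M : Matrix (Fin m) (Fin n) ℝ) : 0 < (1 + Mᵀ * M).det := by
  have h1 : (Mᵀ * M).PosSemidef := by
    have := Matrix.posSemidef_conjTranspose_mul_self M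
    rw [Matrix.conjTranspose_eq_transpose_of_trivial] at this; exact this
  have : (1 + Mᵀ * M).PosDef := (Matrix.PosDef.one).add_posSemidef h1
  exact this.det_pos

lemma contDiff_Farea {m n : ℕ} : ContDiff ℝ (⊤ : ℕ∞) (Farea : Matrix (Fin m) (Fin n) ℝ → ℝ) := by
  rw [contDiff_iff_contDiffAt]
  intro M
  have hg : ContDiff ℝ (⊤ : ℕ∞) (fun M : Matrix (Fin m) (Fin n) ℝ => (1 + Mᵀ * M).det) := by
    refine contDiff_det.comp ?_
    refine contDiff_pi.2 ?_
    intro i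
    refine contDiff_pi.2 ?_
    intro j
    have h2 : (fun M : Matrix (Fin m) (Fin n) ℝ => ((1 + Mᵀ * M : Matrix (Fin n) (Fin n) ℝ) i j))
        = fun M : Matrix (Fin m) (Fin n) ℝ =>
            (if i = j then (1:ℝ) else 0) + ∑ k, M k i * M k j := by
      funext M
      simp [Matrix.add_apply, Matrix.mul_apply, Matrix.one_apply, Matrix.transpose_apply]
    show ContDiff ℝ (⊤ : ℕ∞) (fun M : Matrix (Fin m) (Fin n) ℝ => ((1 + Mᵀ * M : Matrix (Fin n) (Fin n) ℝ) i j))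
    rw [h2]
    exact contDiff_const.add (ContDiff.sum fun k _ =>
      (contDiff_entry k i).mul (contDiff_entry k j))
  exact (Real.contDiffAt_sqrt (det_one_add_pos M).ne').comp M hg.contDiffAt

lemma contDiffAt_Jac {n m : ℕ} {Ω : Set (Fin n → ℝ)} (hΩ : IsOpen Ω)
    {w : (Fin n → ℝ) → Fin m → ℝ} (hw : ContDiffOn ℝ 2 w Ω) {y : Fin n → ℝ} (hy : y ∈ Ω) :
    ContDiffAt ℝ 1 (Jac w) y := by
  have hw2 : ContDiffAt ℝ 2 w y := hw.contDiffAt (hΩ.mem_nhds hy)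
  have h1 : ContDiffAt ℝ 1 (fderiv ℝ w) y := hw2.fderiv_right (by norm_num)
  have hev : Jac w =ᶠ[nhds y]
      fun y' => Matrix.of fun (α : Fin m) (i : Fin n) => fderiv ℝ w y' (Pi.single i 1) α := by
    filter_upwards [hΩ.mem_nhds hy] with y' hy'
    have hdiff : DifferentiableAt ℝ w y' :=
      (hw.differentiableOn (by norm_num)).differentiableAt (hΩ.mem_nhds hy')
    ext α i
    have h2 : HasFDerivAt (fun t => w t α)
        ((ContinuousLinearMap.proj (R := ℝ) (φ := fun _ : Fin m => ℝ) α).comp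
          (fderiv ℝ w y')) y' := by
      exact ((ContinuousLinearMap.proj (R := ℝ) (φ := fun _ : Fin m => ℝ)
        α).hasFDerivAt).comp y' hdiff.hasFDerivAt
    simp [Jac, h2.fderiv]
  refine ContDiffAt.congr_of_eventuallyEq ?_ hev
  have : ContDiffAt ℝ 1
      (fun y' => (fun (α : Fin m) (i : Fin n) => fderiv ℝ w y' (Pi.single i 1) α :
        Matrix (Fin m) (Fin n) ℝ)) y := by
    rw [contDiffAt_pi]
    intro α
    rw [contDiffAt_pi]
    intro i
    exact ((ContinuousLinearMap.proj (R := ℝ) (φ := fun _ : Fin m => ℝ)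
      α).contDiff.contDiffAt).comp y (h1.clm_apply contDiffAt_const)
  exact this

lemma clm_expand {n : ℕ} (L : (Fin n → ℝ) →L[ℝ] ℝ) (u : Fin n → ℝ) :
    L u = ∑ j, L (Pi.single j 1) * u j := by
  have h : u = ∑ j, u j • (Pi.single j 1 : Fin n → ℝ) := by
    funext l
    rw [Finset.sum_apply]
    have : ∀ j : Fin n, (u j • (Pi.single j 1 : Fin n → ℝ)) l = if l = j then u j else 0 := by
      intro j
      rcases eq_or_ne l j with rfl | hlj
      · simp
      · simp [Pi.single_apply, hlj, Ne.symm hlj]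
    rw [Finset.sum_congr rfl fun j _ => this j]
    simp
  conv_lhs => rw [h]
  rw [map_sum]
  refine Finset.sum_congr rfl fun j _ => ?_
  rw [L.map_smul]
  simp [mul_comm]

/-! ### Determinant combinatorics -/

lemma cofactor {n : ℕ} (c : Fin (n+1) → ℝ) (g : Fin (n+1) → Fin n → ℝ) :
    ∑ k : Fin (n+1), (-1:ℝ)^(k:ℕ) * c k * (Matrix.of fun r j => g (k.succAbove r) j).det
      = (Matrix.of fun r (l : Fin (n+1)) => Fin.cases (c r) (g r) l).det := by
  rw [Matrix.det_succ_column_zero]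
  refine Finset.sum_congr rfl fun k _ => ?_
  simp only [Matrix.of_apply, Fin.cases_zero]
  congr 1

lemma detA_zero {n : ℕ} (a : Fin n → ℝ) (x : Fin (n+1) → Fin n → ℝ) :
    (Matrix.of fun r (l : Fin (n+1)) =>
      (Fin.cases (∑ j, a j * x r j) (x r) l : ℝ)).det = 0 := by
  set N : Matrix (Fin (n+1)) (Fin (n+1)) ℝ :=
    Matrix.of fun r (l : Fin (n+1)) => (Fin.cases (∑ j, a j * x r j) (x r) l : ℝ) with hNdef
  set d : Fin (n+1) → ℝ := fun l => Fin.cases 0 a l with hd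
  have hN : N = N.updateCol 0 (fun r => ∑ l, d l • N r l) := by
    ext r l
    rw [Matrix.updateCol_apply]
    split
    · next h =>
      subst h
      simp only [hNdef, hd, Matrix.of_apply, Fin.cases_zero, smul_eq_mul]
      rw [Fin.sum_univ_succ]
      simp
    · rfl
  conv_lhs => rw [hN]
  rw [Matrix.det_updateCol_sum]
  simp [hd]

lemma detB_eq {n : ℕ} (b : Fin n → ℝ) (i : Fin n) (x : Fin (n+1) → Fin n → ℝ)
    (z : Fin (n+1) → ℝ) :
    (Matrix.of fun r (l : Fin (n+1)) =>
        Fin.cases (∑ j, b j * x r j) (fun j => if j = i then z r else x r j) l).det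
      = -(b i * (Matrix.of fun r (l : Fin (n+1)) => Fin.cases (z r) (x r) l).det) := by
  set g : Fin (n+1) → Fin n → ℝ := fun r j => if j = i then z r else x r j with hg
  set Q : Matrix (Fin (n+1)) (Fin (n+1)) ℝ :=
    Matrix.of fun r (l : Fin (n+1)) => Fin.cases (x r i) (g r) l with hQ
  set d : Fin (n+1) → ℝ := fun l => Fin.cases (b i) (fun j => if j = i then 0 else b j) l with hd
  have h1 : (Matrix.of fun r (l : Fin (n+1)) =>
        Fin.cases (∑ j, b j * x r j) (fun j => if j = i then z r else x r j) l)
      = Q.updateCol 0 (fun r => ∑ l, d l • Q r l) := by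
    ext r l
    rw [Matrix.updateCol_apply]
    split
    · next h =>
      subst h
      simp only [Matrix.of_apply, Fin.cases_zero, smul_eq_mul, hQ, hd]
      rw [Fin.sum_univ_succ]
      simp only [Fin.cases_zero, Fin.cases_succ]
      have : ∀ j : Fin n, (if j = i then (0:ℝ) else b j) * g r j
          = if j = i then 0 else b j * x r j := by
        intro j; by_cases h : j = i <;> simp [hg, h]
      rw [Finset.sum_congr rfl fun j _ => this j]
      have h2 : ∑ j, b j * x r j
          = (if i ∈ Finset.univ then b i * x r i else 0)
            + ∑ j ∈ Finset.univ, if j = i then 0 else b j * x r j := by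
        rw [← Finset.sum_ite_eq' Finset.univ i (fun j => b j * x r j), ← Finset.sum_add_distrib]
        refine Finset.sum_congr rfl fun j _ => ?_
        by_cases h : j = i <;> simp [h]
      rw [h2]; simp
    · next h =>
      rcases Fin.eq_succ_of_ne_zero h with ⟨j, rfl⟩
      simp [hQ, hg]
  rw [h1, Matrix.det_updateCol_sum]
  have h3 : (Matrix.of fun r (l : Fin (n+1)) => Fin.cases (z r) (x r) l)
      = Q.submatrix id (Equiv.swap 0 i.succ) := by
    ext r l
    simp only [Matrix.submatrix_apply, id_eq, Matrix.of_apply]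
    rcases eq_or_ne l 0 with rfl | hl0
    · rw [Equiv.swap_apply_left]
      simp [hQ, hg]
    · rcases Fin.eq_succ_of_ne_zero hl0 with ⟨j, rfl⟩
      rcases eq_or_ne j i with rfl | hji
      · rw [Equiv.swap_apply_right]
        simp [hQ]
      · rw [Equiv.swap_apply_of_ne_of_ne hl0 (by simpa using hji)]
        simp [hQ, hg, hji]
  have h4 : (Matrix.of fun r (l : Fin (n+1)) => Fin.cases (z r) (x r) l).det = - Q.det := by
    rw [h3, Matrix.det_permute']
    rw [Equiv.Perm.sign_swap (Ne.symm (Fin.succ_ne_zero i))]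
    simp
  rw [show d 0 = b i from rfl]
  rw [smul_eq_mul]
  rw [show Q.det = -(Matrix.of fun r (l : Fin (n+1)) => Fin.cases (z r) (x r) l).det by
    rw [h4]; ring]
  ring

lemma key {n m : ℕ} (v : Fin (n+1) → (Fin n → ℝ) × (Fin m → ℝ)) (a : Fin n → ℝ)
    (b : Fin m → Fin n → Fin n → ℝ) :
    ∑ k : Fin (n+1), (-1:ℝ)^(k:ℕ) *
      ((∑ j, a j * (v k).1 j) * (Matrix.of fun r c => (v (k.succAbove r)).1 c).det
        + ∑ α, ∑ i, (∑ j, b α i j * (v k).1 j) *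
          (Matrix.of fun r c : Fin n =>
            if c = i then (v (k.succAbove r)).2 α else (v (k.succAbove r)).1 c).det)
      = -∑ α, (∑ i, b α i i) * dzdx α v := by
  have hsplit : ∀ k : Fin (n+1), (-1:ℝ)^(k:ℕ) *
      ((∑ j, a j * (v k).1 j) * (Matrix.of fun r c => (v (k.succAbove r)).1 c).det
        + ∑ α, ∑ i, (∑ j, b α i j * (v k).1 j) *
          (Matrix.of fun r c : Fin n =>
            if c = i then (v (k.succAbove r)).2 α else (v (k.succAbove r)).1 c).det)
      = (-1:ℝ)^(k:ℕ) * (∑ j, a j * (v k).1 j) *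
          (Matrix.of fun r c => (v (k.succAbove r)).1 c).det
        + ∑ α, ∑ i, (-1:ℝ)^(k:ℕ) * (∑ j, b α i j * (v k).1 j) *
          (Matrix.of fun r c : Fin n =>
            if c = i then (v (k.succAbove r)).2 α else (v (k.succAbove r)).1 c).det := by
    intro k
    rw [mul_add, Finset.mul_sum]
    congr 1
    · ring
    · refine Finset.sum_congr rfl fun α _ => ?_
      rw [Finset.mul_sum]
      exact Finset.sum_congr rfl fun i _ => by ring
  rw [Finset.sum_congr rfl fun k _ => hsplit k, Finset.sum_add_distrib]
  have hA : ∑ k : Fin (n+1), (-1:ℝ)^(k:ℕ) * (∑ j, a j * (v k).1 j) *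
      (Matrix.of fun r c => (v (k.succAbove r)).1 c).det = 0 := by
    rw [cofactor (fun k => ∑ j, a j * (v k).1 j) (fun r => (v r).1)]
    exact detA_zero a (fun r => (v r).1)
  rw [hA, zero_add]
  rw [Finset.sum_comm]
  have hB : ∀ α : Fin m, ∑ k : Fin (n+1), ∑ i, (-1:ℝ)^(k:ℕ) * (∑ j, b α i j * (v k).1 j) *
      (Matrix.of fun r c : Fin n =>
        if c = i then (v (k.succAbove r)).2 α else (v (k.succAbove r)).1 c).det
      = ∑ i, -(b α i i * dzdx α v) := by
    intro α
    rw [Finset.sum_comm]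
    refine Finset.sum_congr rfl fun i _ => ?_
    rw [cofactor (fun k => ∑ j, b α i j * (v k).1 j)
      (fun r j => if j = i then (v r).2 α else (v r).1 j)]
    rw [detB_eq (b α i) i (fun r => (v r).1) (fun r => (v r).2 α)]
    rfl
  rw [Finset.sum_congr rfl fun α _ => hB α]
  simp [Finset.mul_sum, Finset.sum_mul]

/-- `dω = −∑_α ∂ᵢ(F_{p^α_i}(Dw)) dz_α∧dx₁∧…∧dxₙ`; in particular `ω` is
closed (a calibration for the graph of `w`) whenever `w` solves the minimal surface
system `∑ᵢ ∂ᵢ(F_{p^α_i}(Dw)) = 0` for all `α`. -/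
theorem dOmega_formula {n m : ℕ}
    (Ω : Set (Fin n → ℝ)) (hΩ : IsOpen Ω) (hΩb : Bornology.IsBounded Ω)
    (w : (Fin n → ℝ) → Fin m → ℝ) (hw : ContDiffOn ℝ 2 w Ω) :
    (∀ p : (Fin n → ℝ) × (Fin m → ℝ), p.1 ∈ Ω →
      ∀ v : Fin (n + 1) → (Fin n → ℝ) × (Fin m → ℝ),
        dOmega w p v
          = -∑ α, (∑ i, pd (fun y => DFarea (Jac w y) α i) i p.1) * dzdx α v) ∧
    ((∀ x ∈ Ω, ∀ α : Fin m, ∑ i, pd (fun y => DFarea (Jac w y) α i) i x = 0) →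
      ∀ p : (Fin n → ℝ) × (Fin m → ℝ), p.1 ∈ Ω →
        ∀ v : Fin (n + 1) → (Fin n → ℝ) × (Fin m → ℝ), dOmega w p v = 0) := by
  have main : ∀ p : (Fin n → ℝ) × (Fin m → ℝ), p.1 ∈ Ω →
      ∀ v : Fin (n + 1) → (Fin n → ℝ) × (Fin m → ℝ),
        dOmega w p v
          = -∑ α, (∑ i, pd (fun y => DFarea (Jac w y) α i) i p.1) * dzdx α v := by
    intro p hp v
    have hJ : ContDiffAt ℝ 1 (Jac w) p.1 := contDiffAt_Jac hΩ hw hp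
    have hBat : ∀ (α : Fin m) (i : Fin n),
        ContDiffAt ℝ 1 (fun y => DFarea (Jac w y) α i) p.1 := by
      intro α i
      have h : ContDiff ℝ 1 (fun N : Matrix (Fin m) (Fin n) ℝ =>
          fderiv ℝ Farea N (Matrix.single α i 1)) :=
        (contDiff_Farea.fderiv_right (WithTop.coe_le_coe.2 le_top)).clm_apply contDiff_const
      exact h.contDiffAt.comp p.1 hJ
    have hEnt : ∀ (α : Fin m) (i : Fin n), ContDiffAt ℝ 1 (fun y => Jac w y α i) p.1 :=
      fun α i => ((contDiff_entry α i).of_le (by simp)).contDiffAt.comp p.1 hJ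
    have hAat : ContDiffAt ℝ 1 (fun y => Farea (Jac w y)
        - ∑ α, ∑ i, DFarea (Jac w y) α i * Jac w y α i) p.1 := by
      refine ContDiffAt.sub ((contDiff_Farea.of_le (by simp)).contDiffAt.comp p.1 hJ) ?_
      exact ContDiffAt.sum fun α _ => ContDiffAt.sum fun i _ => (hBat α i).mul (hEnt α i)
    have hstep : ∀ k : Fin (n+1),
        fderiv ℝ (fun q => omegaForm w q (fun j => v (k.succAbove j))) p (v k)
        = (∑ j, fderiv ℝ (fun y => Farea (Jac w y)
              - ∑ α, ∑ i, DFarea (Jac w y) α i * Jac w y α i) p.1 (Pi.single j 1) * (v k).1 j) *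
            (Matrix.of fun r c => (v (k.succAbove r)).1 c).det
          + ∑ α, ∑ i, (∑ j, fderiv ℝ (fun y => DFarea (Jac w y) α i) p.1 (Pi.single j 1)
              * (v k).1 j) *
            (Matrix.of fun r c : Fin n =>
              if c = i then (v (k.succAbove r)).2 α else (v (k.succAbove r)).1 c).det := by
      intro k
      set D : ℝ := (Matrix.of fun r c => (v (k.succAbove r)).1 c).det with hD
      set E : Fin m → Fin n → ℝ := fun α i => (Matrix.of fun r c : Fin n =>
        if c = i then (v (k.succAbove r)).2 α else (v (k.succAbove r)).1 c).det with hE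
      set LA := fderiv ℝ (fun y => Farea (Jac w y)
        - ∑ α, ∑ i, DFarea (Jac w y) α i * Jac w y α i) p.1 with hLA
      set LB : Fin m → Fin n → ((Fin n → ℝ) →L[ℝ] ℝ) := fun α i =>
        fderiv ℝ (fun y => DFarea (Jac w y) α i) p.1 with hLB
      have hG : HasFDerivAt (fun y => (Farea (Jac w y)
            - ∑ α, ∑ i, DFarea (Jac w y) α i * Jac w y α i) * D
            + ∑ α, ∑ i, DFarea (Jac w y) α i * E α i)
          (D • LA + ∑ α, ∑ i, E α i • LB α i) p.1 := by
        refine HasFDerivAt.add ((hAat.differentiableAt one_ne_zero).hasFDerivAt.mul_const D) ?_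
        exact HasFDerivAt.fun_sum fun α _ => HasFDerivAt.fun_sum fun i _ =>
          (((hBat α i).differentiableAt one_ne_zero).hasFDerivAt).mul_const (E α i)
      have hcomp : HasFDerivAt (fun q : (Fin n → ℝ) × (Fin m → ℝ) =>
          omegaForm w q (fun j => v (k.succAbove j)))
          ((D • LA + ∑ α, ∑ i, E α i • LB α i).comp
            (ContinuousLinearMap.fst ℝ (Fin n → ℝ) (Fin m → ℝ))) p :=
        hG.comp p hasFDerivAt_fst
      rw [hcomp.fderiv]
      simp only [ContinuousLinearMap.coe_comp', Function.comp_apply,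
        ContinuousLinearMap.coe_fst', ContinuousLinearMap.add_apply,
        ContinuousLinearMap.smul_apply, ContinuousLinearMap.coe_sum',
        Finset.sum_apply, smul_eq_mul]
      rw [clm_expand LA ((v k).1)]
      congr 1
      · rw [mul_comm]
      · refine Finset.sum_congr rfl fun α _ => Finset.sum_congr rfl fun i _ => ?_
        rw [clm_expand (LB α i) ((v k).1), mul_comm]
    have h1 : dOmega w p v = ∑ k : Fin (n+1), (-1:ℝ)^(k:ℕ) *
        ((∑ j, fderiv ℝ (fun y => Farea (Jac w y)
            - ∑ α, ∑ i, DFarea (Jac w y) α i * Jac w y α i) p.1 (Pi.single j 1) * (v k).1 j) *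
          (Matrix.of fun r c => (v (k.succAbove r)).1 c).det
        + ∑ α, ∑ i, (∑ j, fderiv ℝ (fun y => DFarea (Jac w y) α i) p.1 (Pi.single j 1)
            * (v k).1 j) *
          (Matrix.of fun r c : Fin n =>
            if c = i then (v (k.succAbove r)).2 α else (v (k.succAbove r)).1 c).det) := by
      unfold dOmega
      exact Finset.sum_congr rfl fun k _ => by rw [hstep k]
    rw [h1]
    exact key v (fun j => fderiv ℝ (fun y => Farea (Jac w y)
        - ∑ α, ∑ i, DFarea (Jac w y) α i * Jac w y α i) p.1 (Pi.single j 1))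
      (fun α i j => fderiv ℝ (fun y => DFarea (Jac w y) α i) p.1 (Pi.single j 1))
  refine ⟨main, ?_⟩
  intro hmin p hp v
  rw [main p hp v]
  have h := hmin p.1 hp
  simp [h]
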